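/- arXiv:1502.07247 — 8 statements merged into one kernel-verified Lean document; each statement's English description precedes it below -/
import Mathlib

section
/- Let R ⊆ S be a ring extension and J an ideal of S with I = J ∩ R. If [R,S] is a chain under inclusion, then [R/I, S/J] is a chain under inclusion. -/
theorem Subring.isChain_Ici_map_of_surjective {S S' : Type*} [Ring S] [Ring S'] {f : S →+* S'}
    (hf : Function.Surjective f) {R : Subring S} (hR : IsChain (· ≤ ·) (Set.Ici R)) :
    IsChain (· ≤ ·) (Set.Ici (R.map f)) := by
  have gi : GaloisInsertion (Subring.map f) (Subring.comap f) :=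
    (Subring.gc_map_comap f).toGaloisInsertion fun T ↦
      (Subring.map_comap_eq_self_of_surjective hf T).ge
  intro T₁ h₁ T₂ h₂ _
  simpa only [gi.u_le_u_iff] using
    hR.total (Subring.map_le_iff_le_comap.mp h₁) (Subring.map_le_iff_le_comap.mp h₂)

/-- If the set of intermediate rings of `R ⊆ S` is a chain under inclusion, then so is
the set of intermediate rings of `(R + J)/J ⊆ S/J` for any ideal `J` of `S`. -/
theorem stmt8 (S : Type*) [CommRing S] (R : Subring S) (J : Ideal S)
    (hchain : ∀ T₁ T₂ : Subring S, R ≤ T₁ → R ≤ T₂ → T₁ ≤ T₂ ∨ T₂ ≤ T₁) :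
    ∀ T₁' T₂' : Subring (S ⧸ J),
      Subring.map (Ideal.Quotient.mk J) R ≤ T₁' →
      Subring.map (Ideal.Quotient.mk J) R ≤ T₂' →
      T₁' ≤ T₂' ∨ T₂' ≤ T₁' := by
  intro T₁' T₂' h₁ h₂
  have hR : IsChain (· ≤ ·) (Set.Ici R) := fun T₁ h₁ T₂ h₂ _ ↦ hchain T₁ T₂ h₁ h₂
  exact (Subring.isChain_Ici_map_of_surjective Ideal.Quotient.mk_surjective hR).total h₁ h₂
end

section
/- Let R ⊆ S be a ring extension such that [R,S] is a chain, and let R̄ denote the integral closure of R in S. For every invertible element x of S, either x ∈ R̄ or x⁻¹ ∈ R̄. -/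
/-!
Let `x` be a unit of `S`. Since the `R`-subalgebras `R[x]` and `R[x⁻¹]` are comparable, one of
`x`, `x⁻¹` lies in the subalgebra generated by its own inverse. If `u = p(u⁻¹)` with
`deg p ≤ n`, multiplying by `uⁿ` gives `u ^ (n + 1) = (reflect n p)(u)`, and
`X ^ (n + 1) - reflect n p` is monic, so `u` is integral over `R`.
-/

open Polynomial

theorem Units.isIntegral_of_mem_adjoin_inv {R S : Type*} [CommRing R] [CommRing S] [Algebra R S]
    (u : Sˣ) (h : (u : S) ∈ Algebra.adjoin R {((u⁻¹ : Sˣ) : S)}) : IsIntegral R (u : S) := by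
  rw [Algebra.adjoin_singleton_eq_range_aeval] at h
  obtain ⟨p, hp⟩ := h
  change aeval _ p = _ at hp
  set n := p.natDegree
  let _ := (u⁻¹).invertible
  have hreflect : aeval (u : S) (p.reflect n) = (u : S) ^ (n + 1) := by
    have h_inv : aeval (u : S) (p.reflect n) * ↑u⁻¹ ^ n = u := by
      simpa only [invOf_units, inv_inv, ← aeval_def, hp] using
        eval₂_reflect_mul_pow (algebraMap R S) ((u⁻¹ : Sˣ) : S) n p le_rfl
    calc aeval (u : S) (p.reflect n)
        _ = aeval (u : S) (p.reflect n) * ↑u⁻¹ ^ n * ↑u ^ n := by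
          rw [mul_assoc, ← mul_pow, Units.inv_mul, one_pow, mul_one]
        _ = (u : S) ^ (n + 1) := by rw [h_inv, pow_succ']
  have hdeg : (p.reflect n).natDegree ≤ n := natDegree_reflect_le.trans (max_self _).le
  refine ⟨X ^ (n + 1) - p.reflect n, monic_X_pow_sub ?_, ?_⟩
  · exact (degree_le_of_natDegree_le hdeg).trans_lt (by exact_mod_cast n.lt_succ_self)
  · rw [← aeval_def, map_sub, map_pow, aeval_X, hreflect, sub_self]

/-- If the intermediate `R`-subalgebras of `S` form a chain, then for every invertible
element `x` of `S`, either `x` or `x⁻¹` lies in the integral closure of `R` in `S`. -/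
theorem stmt9 (R S : Type*) [CommRing R] [CommRing S] [Algebra R S]
    (hchain : ∀ B C : Subalgebra R S, B ≤ C ∨ C ≤ B) (x : Sˣ) :
    (x : S) ∈ integralClosure R S ∨ ((x⁻¹ : Sˣ) : S) ∈ integralClosure R S := by
  rcases hchain (Algebra.adjoin R {(x : S)}) (Algebra.adjoin R {((x⁻¹ : Sˣ) : S)}) with h | h
  · exact .inl <| x.isIntegral_of_mem_adjoin_inv <| h <| Algebra.self_mem_adjoin_singleton R _
  · refine .inr <| x⁻¹.isIntegral_of_mem_adjoin_inv ?_
    rw [inv_inv]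
    exact h <| Algebra.self_mem_adjoin_singleton R _
end

section
/- Let R̄ be an integrally closed subring of S and x a unit of S. Then every element of R̄[x] ∩ R̄[x⁻¹] is integral over R̄; consequently if R̄ is integrally closed in S then R̄[x] ∩ R̄[x⁻¹] = R̄. -/
/-!
Write `y = p(x) = q(x⁻¹)` with polynomials `p`, `q` over `A` of degrees `d`, `e`. Multiplication
by `y` maps the `A`-span of `1, x, …, x^(d+e)` into itself: on `x^k` use `p` when `k < e` and `q`
when `k ≥ e`. This span is finitely generated and contains `1`, so the determinant trick makes `y`
integral over `A`.
-/

open Polynomial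

namespace Submodule

variable {R B : Type*} [CommRing R] [Ring B] [Algebra R B] (N : Submodule R B)

def mulLeftStabilizer : Subalgebra R B where
  carrier := {b | ∀ n ∈ N, b * n ∈ N}
  mul_mem' ha hb n hn := mul_assoc _ _ n ▸ ha _ (hb n hn)
  add_mem' ha hb n hn := (add_mul _ _ n).symm ▸ N.add_mem (ha n hn) (hb n hn)
  algebraMap_mem' r n hn := (Algebra.smul_def r n).symm ▸ N.smul_mem r hn

def mulLeftStabilizerToEnd : N.mulLeftStabilizer →ₐ[R] Module.End R N :=
  AlgHom.ofLinearMap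
    { toFun b := (LinearMap.mulLeft R (b : B)).restrict b.2
      map_add' b c := by ext; exact add_mul _ _ _
      map_smul' r b := by ext; exact smul_mul_assoc _ _ _ }
    (by ext; exact one_mul _)
    (fun b c => by ext; exact mul_assoc _ _ _)

theorem mulLeftStabilizerToEnd_injective (h1 : (1 : B) ∈ N) :
    Function.Injective N.mulLeftStabilizerToEnd := fun b c hbc => by
  have h : (b : B) * 1 = c * 1 := congrArg Subtype.val (LinearMap.congr_fun hbc ⟨1, h1⟩)
  exact Subtype.ext (by simpa using h)

end Submodule

theorem isIntegral_of_mul_mem_submodule {R B : Type*} [CommRing R] [Ring B] [Algebra R B]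
    {N : Submodule R B} (hN : N.FG) (h1 : (1 : B) ∈ N) {b : B} (hb : ∀ n ∈ N, b * n ∈ N) :
    IsIntegral R b := by
  have : Module.Finite R N := Module.Finite.iff_fg.mpr hN
  have hb' : IsIntegral R (⟨b, hb⟩ : N.mulLeftStabilizer) :=
    (isIntegral_algHom_iff (B := Module.End R N) _
      (N.mulLeftStabilizerToEnd_injective h1)).mp (Algebra.IsIntegral.isIntegral _)
  exact (isIntegral_algHom_iff N.mulLeftStabilizer.val Subtype.val_injective).mpr hb'

section PowSpan

variable (R : Type*) {B : Type*} [CommRing R] [CommRing B] [Algebra R B]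

abbrev powSpan (x : B) (n : ℕ) : Submodule R B :=
  Submodule.span R ((x ^ ·) '' Set.Iic n)

variable {R}

theorem pow_mem_powSpan (x : B) {i n : ℕ} (h : i ≤ n) : x ^ i ∈ powSpan R x n :=
  Submodule.subset_span ⟨i, h, rfl⟩

theorem one_mem_powSpan (x : B) (n : ℕ) : (1 : B) ∈ powSpan R x n :=
  pow_zero x ▸ pow_mem_powSpan x n.zero_le

theorem powSpan_fg (x : B) (n : ℕ) : (powSpan R x n).FG :=
  Submodule.fg_span ((Set.finite_Iic n).image _)

theorem aeval_mul_pow_mem_powSpan (x : B) (p : R[X]) {k n : ℕ} (h : p.natDegree + k ≤ n) :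
    aeval x p * x ^ k ∈ powSpan R x n := by
  rw [aeval_eq_sum_range, Finset.sum_mul]
  refine Submodule.sum_mem _ fun i hi => ?_
  rw [smul_mul_assoc, ← pow_add]
  exact Submodule.smul_mem _ _ (pow_mem_powSpan x (by grind))

theorem aeval_inv_mul_pow_mem_powSpan (x : Bˣ) (q : R[X]) {k n : ℕ} (hq : q.natDegree ≤ k)
    (hk : k ≤ n) : aeval (x⁻¹ : Bˣ).val q * x.val ^ k ∈ powSpan R x.val n := by
  rw [aeval_eq_sum_range, Finset.sum_mul]
  refine Submodule.sum_mem _ fun j hj => ?_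
  have hjk : j ≤ k := by grind
  rw [smul_mul_assoc, ← Units.val_pow_eq_pow_val, ← Units.val_pow_eq_pow_val, ← Units.val_mul,
    inv_pow, mul_comm, ← pow_sub _ hjk, Units.val_pow_eq_pow_val]
  exact Submodule.smul_mem _ _ (pow_mem_powSpan _ (by omega))

theorem isIntegral_of_mem_adjoin_inf_adjoin_inv (x : Bˣ) {y : B}
    (hy : y ∈ Algebra.adjoin R {x.val} ⊓ Algebra.adjoin R {(x⁻¹ : Bˣ).val}) : IsIntegral R y := by
  obtain ⟨⟨p, rfl⟩, ⟨q, hq⟩⟩ : y ∈ (aeval x.val).range ∧ y ∈ (aeval (x⁻¹ : Bˣ).val).range := by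
    simpa only [Algebra.adjoin_singleton_eq_range_aeval, Algebra.mem_inf] using hy
  set N := powSpan R x.val (p.natDegree + q.natDegree)
  have hstable : N ≤ N.comap (LinearMap.mulLeft R (aeval x.val p)) := by
    refine Submodule.span_le.mpr ?_
    rintro _ ⟨k, hk, rfl⟩
    rcases lt_or_ge k q.natDegree with hkq | hqk
    · exact aeval_mul_pow_mem_powSpan _ _ (by grind)
    · exact hq ▸ aeval_inv_mul_pow_mem_powSpan _ _ hqk hk
  exact isIntegral_of_mul_mem_submodule (powSpan_fg _ _) (one_mem_powSpan _ _)
    fun n hn => hstable hn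

end PowSpan

theorem Subring.closure_union_singleton_eq_adjoin {S : Type*} [CommRing S] (A : Subring S)
    (z : S) : Subring.closure (↑A ∪ {z}) = (Algebra.adjoin A {z}).toSubring := by
  rw [Algebra.adjoin_eq_ring_closure]
  exact congrArg (fun s => Subring.closure (s ∪ {z})) Subtype.range_coe.symm

/-- Let `A` be a subring of `S` and `x` a unit of `S`. Every element of
`A[x] ∩ A[x⁻¹]` is integral over `A`; consequently, if `A` is integrally closed in `S`
then `A[x] ∩ A[x⁻¹] = A`. -/
theorem stmt10 (S : Type*) [CommRing S] (A : Subring S) (x : Sˣ) :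
    (∀ y : S,
        y ∈ Subring.closure (↑A ∪ {(x : S)}) ⊓ Subring.closure (↑A ∪ {((x⁻¹ : Sˣ) : S)}) →
          IsIntegral A y) ∧
      ((∀ y : S, IsIntegral A y → y ∈ A) →
        Subring.closure (↑A ∪ {(x : S)}) ⊓ Subring.closure (↑A ∪ {((x⁻¹ : Sˣ) : S)}) = A) := by
  have hintegral : ∀ y : S,
      y ∈ Subring.closure (↑A ∪ {(x : S)}) ⊓ Subring.closure (↑A ∪ {((x⁻¹ : Sˣ) : S)}) →
        IsIntegral A y := by
    intro y hy
    simp only [Subring.closure_union_singleton_eq_adjoin] at hy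
    exact isIntegral_of_mem_adjoin_inf_adjoin_inv x hy
  refine ⟨hintegral, fun hclosed => le_antisymm (fun y hy => hclosed y (hintegral y hy)) ?_⟩
  exact le_inf (fun a ha => Subring.subset_closure (Or.inl ha))
    (fun a ha => Subring.subset_closure (Or.inl ha))
end

section
/- Let R ⊂ T be a ring extension such that M := (R : T) (the conductor) is a maximal ideal of both R and T and R/M → T/M is a minimal field extension. Then R ⊂ T is a minimal ring extension (there is no ring strictly between R and T). -/
/-!
Since `M ⊆ R`, a ring `R ⊆ U ⊆ T` is the preimage of its image in `T/M`, so it suffices to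
show that `R/M ⊆ T/M` is a minimal ring extension. A minimal field extension `K ⊆ E` is
algebraic (for transcendental `x`, the field `K(x²)` lies strictly between `K` and `E`), and in
an algebraic extension every ring containing `K` is a field.
-/

open Polynomial IntermediateField

theorem Transcendental.notMem_adjoin_sq {F E : Type*} [Field F] [Field E] [Algebra F E] {x : E}
    (hx : Transcendental F x) : x ∉ F⟮x ^ 2⟯ := by
  rw [mem_adjoin_simple_iff]
  rintro ⟨r, s, hrs⟩
  have hs : Polynomial.aeval (x ^ 2) s ≠ 0 := fun h =>
    hx (by rw [hrs, h, div_zero]; exact isAlgebraic_zero)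
  -- `x · s(x²) = r(x²)` is a polynomial relation for `x` whose odd coefficients are those of `s`
  set p : F[X] := X * expand F 2 s - expand F 2 r
  have hp : p = 0 := by
    by_contra hp
    refine hx ⟨p, hp, ?_⟩
    simp [p, expand_aeval, (eq_div_iff hs).mp hrs]
  have hs0 : s = 0 := by
    ext k
    have hcoeff : p.coeff (2 * k + 1) = 0 := by rw [hp, coeff_zero]
    rwa [coeff_sub, coeff_X_mul, coeff_expand_mul' two_pos,
      coeff_expand two_pos, if_neg (by omega), sub_zero] at hcoeff
  exact hs (by simp [hs0])

section MinimalSubfield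

variable {E : Type*} [Field E] {K : Subfield E}

theorem Subfield.isAlgebraic_of_forall_eq_or_eq_top
    (hmin : ∀ F : Subfield E, K ≤ F → F = K ∨ F = ⊤) (x : E) : IsAlgebraic K x := by
  by_contra hx
  have hKL : K ≤ (K⟮x ^ 2⟯).toSubfield := fun k hk => K⟮x ^ 2⟯.algebraMap_mem ⟨k, hk⟩
  rcases hmin _ hKL with h | h
  · have hx2 : x ^ 2 ∈ K := by
      rw [← h]
      exact mem_adjoin_simple_self K (x ^ 2)
    exact Transcendental.pow hx two_pos (isAlgebraic_algebraMap (⟨x ^ 2, hx2⟩ : K))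
  · refine Transcendental.notMem_adjoin_sq hx ?_
    rw [← mem_toSubfield, h]
    trivial

theorem Subfield.eq_or_eq_top_of_toSubring_le
    (hmin : ∀ F : Subfield E, K ≤ F → F = K ∨ F = ⊤) (S : Subring E) (hKS : K.toSubring ≤ S) :
    S = K.toSubring ∨ S = ⊤ := by
  let A : Subalgebra K E := { S with algebraMap_mem' := fun k => hKS k.2 }
  let F := (Subalgebra.IsAlgebraic.toIntermediateField (S := A)
    fun x _ => isAlgebraic_of_forall_eq_or_eq_top hmin x).toSubfield
  have hF : F.toSubring = S := rfl
  rcases hmin F fun k hk => hKS hk with h | h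
  · exact .inl (hF ▸ congrArg Subfield.toSubring h)
  · exact .inr (hF ▸ congrArg Subfield.toSubring h)

end MinimalSubfield

theorem Subring.le_of_map_quotientMk_le {T : Type*} [CommRing T] {I : Ideal T}
    {U V : Subring T} (hIV : (I : Set T) ⊆ V)
    (h : U.map (Ideal.Quotient.mk I) ≤ V.map (Ideal.Quotient.mk I)) : U ≤ V := by
  intro u hu
  obtain ⟨v, hv, hvu⟩ := h ⟨u, hu, rfl⟩
  simpa using V.sub_mem hv (hIV (Ideal.Quotient.eq.mp hvu))

theorem Ideal.toSubring_fieldRange_quotientMap {T : Type*} [CommRing T] (R : Subring T)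
    (M : Ideal T) [M.IsMaximal] [(M.comap R.subtype).IsMaximal] :
    letI : Field (T ⧸ M) := Ideal.Quotient.field M
    letI : Field (R ⧸ M.comap R.subtype) := Ideal.Quotient.field _
    (Ideal.quotientMap (I := M.comap R.subtype) M R.subtype le_rfl).fieldRange.toSubring =
      R.map (Ideal.Quotient.mk M) := by
  ext y
  constructor
  · rintro ⟨z, rfl⟩
    obtain ⟨r, rfl⟩ := Ideal.Quotient.mk_surjective z
    exact ⟨r, r.2, rfl⟩
  · rintro ⟨r, hr, rfl⟩
    exact ⟨Ideal.Quotient.mk _ ⟨r, hr⟩, rfl⟩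

theorem stmt11_general (T : Type*) [CommRing T] (R : Subring T) (M : Ideal T)
    (hcond : ∀ t : T, t ∈ M ↔ ∀ u : T, t * u ∈ R)
    (hTmax : M.IsMaximal) (hRmax : (M.comap R.subtype).IsMaximal)
    (hmin :
      letI : Field (T ⧸ M) := @Ideal.Quotient.field T _ M hTmax
      letI : Field (↥R ⧸ M.comap R.subtype) :=
        @Ideal.Quotient.field ↥R _ (M.comap R.subtype) hRmax
      ∀ F : Subfield (T ⧸ M),
        (Ideal.quotientMap (I := M.comap R.subtype) M R.subtype le_rfl).fieldRange ≤ F →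
          F = (Ideal.quotientMap (I := M.comap R.subtype) M R.subtype le_rfl).fieldRange ∨
            F = ⊤) :
    ∀ U : Subring T, R ≤ U → U = R ∨ U = ⊤ := by
  intro U hRU
  have hMR : (M : Set T) ⊆ R := fun t ht => by simpa using (hcond t).1 ht 1
  let := Ideal.Quotient.field M
  let := Ideal.Quotient.field (M.comap R.subtype)
  have hrange := Ideal.toSubring_fieldRange_quotientMap R M
  rcases Subfield.eq_or_eq_top_of_toSubring_le hmin (U.map (Ideal.Quotient.mk M))
      (hrange ▸ (Subring.gc_map_comap _).monotone_l hRU) with h | h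
  · exact .inl (le_antisymm (Subring.le_of_map_quotientMk_le hMR (h.trans hrange).le) hRU)
  · exact .inr (top_le_iff.mp (Subring.le_of_map_quotientMk_le (hMR.trans hRU) (h ▸ le_top)))

/-- If the conductor `M = (R : T)` of a ring extension `R ⊂ T` is a maximal ideal of
both `R` and `T`, and the induced residue extension `R/M → T/M` is a minimal field
extension, then `R ⊂ T` is a minimal ring extension. -/
theorem stmt11 (T : Type*) [CommRing T] (R : Subring T) (M : Ideal T)
    (hcond : ∀ t : T, t ∈ M ↔ ∀ u : T, t * u ∈ R)
    (hTmax : M.IsMaximal) (hRmax : (M.comap R.subtype).IsMaximal)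
    (hne : R ≠ ⊤)
    (hnotsurj :
      ¬ Function.Surjective
        (Ideal.quotientMap (I := M.comap R.subtype) M R.subtype le_rfl))
    (hmin :
      letI : Field (T ⧸ M) := @Ideal.Quotient.field T _ M hTmax
      letI : Field (↥R ⧸ M.comap R.subtype) :=
        @Ideal.Quotient.field ↥R _ (M.comap R.subtype) hRmax
      ∀ F : Subfield (T ⧸ M),
        (Ideal.quotientMap (I := M.comap R.subtype) M R.subtype le_rfl).fieldRange ≤ F →
          F = (Ideal.quotientMap (I := M.comap R.subtype) M R.subtype le_rfl).fieldRange ∨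
            F = ⊤) :
    ∀ U : Subring T, R ≤ U → U = R ∨ U = ⊤ :=
  stmt11_general T R M hcond hTmax hRmax hmin
end

section
/- Let R ⊂ S be a ring extension and suppose M := (R:S) is a maximal ideal of R with M ∈ Max(S), and there exists M' ∈ Max(S) with M'² ⊆ M ⊂ M', [S/M : R/M] = 2, and R/M → S/M' an isomorphism (a ramified minimal extension). Then R ⊂ S is subintegral: the spectral map Spec(S) → Spec(R) is bijective and all residual field extensions are isomorphisms. -/
/-!
Since `M ⊆ R` and `S = R + Rb + M`, `S` is a finite `R`-module, so lying over gives surjectivity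
of `Spec S → Spec R`. A prime `Q` of `S` containing `M` contains `M'² ⊆ M`, hence equals `M'`,
and there `R → S/M'` is onto. A prime `Q` not containing `M` misses some `t` of the conductor;
then `s ∈ Q ↔ ts ∈ Q ∩ R` determines `Q` by its contraction, and `s = ts / t` in the residue
field of `Q`, whose numerator and denominator come from `R`.
-/

namespace Ideal

variable {A B : Type*} [CommRing A] [CommRing B]

lemma eq_of_isMaximal_of_mul_self_le {Q M' : Ideal B} [hQ : Q.IsPrime] (hM' : M'.IsMaximal)
    (h : M' * M' ≤ Q) : Q = M' :=
  (hM'.eq_of_le hQ.ne_top ((hQ.mul_le.mp h).elim id id)).symm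

lemma exists_sub_mem_of_quotientMap_surjective {I : Ideal A} {J : Ideal B} {f : A →+* B}
    {hIJ : I ≤ J.comap f} (h : Function.Surjective (quotientMap J f hIJ)) (s : B) :
    ∃ a, s - f a ∈ J := by
  obtain ⟨x, hx⟩ := h (Quotient.mk J s)
  obtain ⟨a, rfl⟩ := Quotient.mk_surjective x
  exact ⟨a, Quotient.eq.mp (by rw [← hx, quotientMap_mk])⟩

lemma ResidueField.map_surjective_of_forall_exists_mul_sub_mem {f : A →+* B} (Q : Ideal B)
    [Q.IsPrime] (h : ∀ s, ∃ a a', f a' ∉ Q ∧ f a' * s - f a ∈ Q) :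
    Function.Surjective (ResidueField.map (Q.comap f) Q f rfl) := by
  set g := ResidueField.map (Q.comap f) Q f rfl
  have hA : ∀ a, algebraMap B Q.ResidueField (f a) ∈ g.fieldRange := fun a =>
    ⟨algebraMap A _ a, ResidueField.map_algebraMap _ _ _ _ a⟩
  have hB : ∀ s, algebraMap B Q.ResidueField s ∈ g.fieldRange := by
    intro s
    obtain ⟨a, a', ha', hs⟩ := h s
    have hne : algebraMap B Q.ResidueField (f a') ≠ 0 :=
      (algebraMap_residueField_eq_zero (I := Q)).not.mpr ha'
    have heq : algebraMap B Q.ResidueField s =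
        algebraMap B Q.ResidueField (f a) / algebraMap B Q.ResidueField (f a') := by
      rw [eq_div_iff hne, mul_comm, ← map_mul, ← sub_eq_zero, ← map_sub]
      exact algebraMap_residueField_eq_zero.mpr hs
    rw [heq]
    exact div_mem (hA a) (hA a')
  intro z
  obtain ⟨x, y, -, rfl⟩ := IsFractionRing.div_surjective (B ⧸ Q) z
  obtain ⟨x, rfl⟩ := Quotient.mk_surjective x
  obtain ⟨y, rfl⟩ := Quotient.mk_surjective y
  simp only [algebraMap_quotient_residueField_mk]
  exact div_mem (hB x) (hB y)

end Ideal

namespace Subring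

variable {S : Type*} [CommRing S]

lemma moduleFinite_of_forall_eq_add_mul (R : Subring S) (b : S)
    (h : ∀ s, ∃ r₁ ∈ R, ∃ r₂ ∈ R, s = r₁ + r₂ * b) : Module.Finite R S := by
  classical
  refine ⟨⟨{1, b}, eq_top_iff.mpr fun s _ => ?_⟩⟩
  obtain ⟨r₁, hr₁, r₂, hr₂, rfl⟩ := h s
  rw [Finset.coe_pair, Submodule.mem_span_pair]
  exact ⟨⟨r₁, hr₁⟩, ⟨r₂, hr₂⟩, by simp [Subring.smul_def]⟩

lemma mem_iff_of_comap_subtype_eq {R : Subring S} {Q₁ Q₂ : Ideal S}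
    (h : Q₁.comap R.subtype = Q₂.comap R.subtype) {x : S} (hx : x ∈ R) :
    x ∈ Q₁ ↔ x ∈ Q₂ :=
  SetLike.ext_iff.mp h ⟨x, hx⟩

lemma eq_of_comap_subtype_eq_of_forall_mul_mem {R : Subring S} {Q₁ Q₂ : Ideal S}
    [Q₁.IsPrime] [Q₂.IsPrime] (h : Q₁.comap R.subtype = Q₂.comap R.subtype) {t : S}
    (ht : ∀ s, t * s ∈ R) (htQ : t ∉ Q₁) : Q₁ = Q₂ := by
  have htQ₂ : t ∉ Q₂ := (mem_iff_of_comap_subtype_eq h (by simpa using ht 1)).not.mp htQ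
  ext s
  rw [← Ideal.IsPrime.mul_mem_left_iff htQ, ← Ideal.IsPrime.mul_mem_left_iff htQ₂]
  exact mem_iff_of_comap_subtype_eq h (ht s)

end Subring

theorem stmt12_general (S : Type*) [CommRing S] (R : Subring S) (M : Ideal S)
    (hcond : ∀ t : S, t ∈ M ↔ ∀ u : S, t * u ∈ R)
    (M' : Ideal S) (hM' : M'.IsMaximal)
    (hsq : M' * M' ≤ M) (hlt : M < M')
    (hdim : ∃ b : S, (¬ ∃ r ∈ R, b - r ∈ M) ∧
      ∀ s : S, ∃ r₁ ∈ R, ∃ r₂ ∈ R, s - (r₁ + r₂ * b) ∈ M)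
    (hiso : Function.Bijective
      (Ideal.quotientMap (I := M.comap R.subtype) M' R.subtype
        (Ideal.comap_mono hlt.le))) :
    Function.Bijective (fun Q : PrimeSpectrum S => (PrimeSpectrum.comap R.subtype) Q) ∧
      ∀ (Q : Ideal S) [Q.IsPrime],
        Function.Bijective
          (IsLocalRing.ResidueField.map
            (Localization.localRingHom (Q.comap R.subtype) Q R.subtype rfl)) := by
  have hMR : ∀ t ∈ M, t ∈ R := fun t ht => by simpa using (hcond t).1 ht 1
  have hQM' : ∀ (Q : Ideal S) [Q.IsPrime], M ≤ Q → Q = M' := fun Q _ hMQ =>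
    Ideal.eq_of_isMaximal_of_mul_self_le hM' (hsq.trans hMQ)
  obtain ⟨b, -, hb⟩ := hdim
  have : Module.Finite R S := R.moduleFinite_of_forall_eq_add_mul b fun s => by
    obtain ⟨r₁, hr₁, r₂, hr₂, hs⟩ := hb s
    exact ⟨r₁ + (s - (r₁ + r₂ * b)), add_mem hr₁ (hMR _ hs), r₂, hr₂, by ring⟩
  refine ⟨⟨fun Q₁ Q₂ h => PrimeSpectrum.ext ?_, Algebra.IsIntegral.comap_surjective R S⟩,
    fun Q _ => ⟨RingHom.injective _, Ideal.ResidueField.map_surjective_of_forall_exists_mul_sub_mem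
      Q fun s => ?_⟩⟩
  · replace h := congrArg PrimeSpectrum.asIdeal h
    by_cases hM : M ≤ Q₁.asIdeal
    · have hM₂ : M ≤ Q₂.asIdeal := fun m hm =>
        (Subring.mem_iff_of_comap_subtype_eq h (hMR m hm)).mp (hM hm)
      rw [hQM' _ hM, hQM' _ hM₂]
    · obtain ⟨t, htM, htQ⟩ := SetLike.not_le_iff_exists.mp hM
      exact Subring.eq_of_comap_subtype_eq_of_forall_mul_mem h ((hcond t).1 htM) htQ
  · by_cases hM : M ≤ Q
    · obtain rfl := hQM' Q hM
      obtain ⟨r, hr⟩ := Ideal.exists_sub_mem_of_quotientMap_surjective hiso.2 s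
      exact ⟨r, 1, by simpa using Q.one_notMem, by simpa using hr⟩
    · obtain ⟨t, htM, htQ⟩ := SetLike.not_le_iff_exists.mp hM
      exact ⟨⟨t * s, (hcond t).1 htM s⟩, ⟨t, hMR t htM⟩, htQ, by simp⟩

/-- A ramified minimal extension is subintegral: if the conductor `M = (R:S)` is a
maximal ideal of `R` and there is `M' ∈ Max(S)` with `M'² ⊆ M ⊂ M'`,
`[S/M : R/M] = 2` and `R/M → S/M'` an isomorphism, then the spectral map
`Spec S → Spec R` is bijective and all residual field extensions are isomorphisms. -/
theorem stmt12 (S : Type*) [CommRing S] (R : Subring S) (M : Ideal S)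
    (hcond : ∀ t : S, t ∈ M ↔ ∀ u : S, t * u ∈ R)
    (hRmax : (M.comap R.subtype).IsMaximal)
    (M' : Ideal S) (hM' : M'.IsMaximal)
    (hsq : M' * M' ≤ M) (hlt : M < M')
    (hdim : ∃ b : S, (¬ ∃ r ∈ R, b - r ∈ M) ∧
      ∀ s : S, ∃ r₁ ∈ R, ∃ r₂ ∈ R, s - (r₁ + r₂ * b) ∈ M)
    (hiso : Function.Bijective
      (Ideal.quotientMap (I := M.comap R.subtype) M' R.subtype
        (Ideal.comap_mono hlt.le))) :
    Function.Bijective (fun Q : PrimeSpectrum S => (PrimeSpectrum.comap R.subtype) Q) ∧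
      ∀ (Q : Ideal S) [Q.IsPrime],
        Function.Bijective
          (IsLocalRing.ResidueField.map
            (Localization.localRingHom (Q.comap R.subtype) Q R.subtype rfl)) :=
  stmt12_general S R M hcond M' hM' hsq hlt hdim hiso
end

section
/- With the notation and hypotheses of the previous setting ((R,M) local Artinian not a field, R ⊂ S finite subintegral with (R:S)=0, n the nilpotency index of M, M_i := M + SM^i, R_i := R + SM^i), if L_R(M_i/M_{i+1}) = 1 for all i = 1,…,n−1, then each extension R_{i+1} ⊂ R_i is a ramified minimal extension, so R = R_n ⊂ R_{n-1} ⊂ ⋯ ⊂ R_1 is a maximal chain of rings. -/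
/-!
Write `Jᵢ = 𝔪ⁱS`, so that `Rᵢ = R + Jᵢ` and `Mᵢ = 𝔪 + Jᵢ`. As `𝔪ⁿ = 0`, the ideal `J₁` is
nilpotent, hence proper, so `R ∩ Jᵢ ⊆ 𝔪` for `i ≥ 1`; this makes `R_{i+1} ≠ Rᵢ`. A ring `T`
between `R_{i+1}` and `Rᵢ` is determined by the `R`-module `Mᵢ ∩ T`, which lies between `M_{i+1}`
and `Mᵢ`, so the covering `M_{i+1} ⋖ Mᵢ` gives minimality. The inclusions `𝔪Jᵢ ⊆ J_{i+1}` and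
`Jᵢ² ⊆ J_{i+1}` give `Mᵢ² ⊆ M_{i+1}` and put `M_{i+1}` in the conductor; conversely an element
`r + z` of the conductor with `r` a unit would force `Jᵢ ⊆ R_{i+1}`.
-/

open IsLocalRing

namespace Ideal

variable {A B : Type*} [CommRing A] [CommRing B] (f : A →+* B) {𝔞 : Ideal A}

theorem mul_mem_map_pow_add {i j : ℕ} {a b : B} (ha : a ∈ (𝔞 ^ i).map f)
    (hb : b ∈ (𝔞 ^ j).map f) : a * b ∈ (𝔞 ^ (i + j)).map f := by
  rw [pow_add, Ideal.map_mul]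
  exact mul_mem_mul ha hb

theorem map_pow_ne_top_of_pow_eq_bot [Nontrivial B] {n i : ℕ} (hn : 𝔞 ^ n = ⊥) (hi : i ≠ 0) :
    (𝔞 ^ i).map f ≠ ⊤ := by
  intro h
  have h𝔞 : 𝔞.map f = ⊤ := top_le_iff.1 (h ▸ map_mono (pow_le_self hi))
  have h' := congrArg (map f) hn
  rw [Ideal.map_pow, h𝔞, top_pow, map_bot] at h'
  exact top_ne_bot h'

end Ideal

namespace Subring

variable {S : Type*} [CommRing S] (R : Subring S)

/-- `R + J`, encoded as the preimage of the image of `R` in `S ⧸ J`. -/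
def addIdeal (J : Ideal S) : Subring S :=
  (R.map (Ideal.Quotient.mk J)).comap (Ideal.Quotient.mk J)

def conductor (T U : Subring S) : Set S :=
  {t | t ∈ U ∧ ∀ u ∈ U, t * u ∈ T}

variable {R} {I J : Ideal S}

theorem mem_addIdeal {s : S} : s ∈ R.addIdeal J ↔ ∃ r ∈ R, ∃ y ∈ J, s = r + y := by
  simp only [addIdeal, mem_comap, mem_map, Ideal.Quotient.eq]
  constructor
  · rintro ⟨r, hr, h⟩
    exact ⟨r, hr, s - r, by simpa using J.neg_mem h, by ring⟩
  · rintro ⟨r, hr, y, hy, rfl⟩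
    exact ⟨r, hr, by simpa using J.neg_mem hy⟩

theorem add_mem_addIdeal {r : S} (hr : r ∈ R) {y : S} (hy : y ∈ J) :
    r + y ∈ R.addIdeal J :=
  mem_addIdeal.2 ⟨r, hr, y, hy, rfl⟩

theorem le_addIdeal : R ≤ R.addIdeal J :=
  fun r hr => by simpa using add_mem_addIdeal hr J.zero_mem

theorem addIdeal_mono (h : I ≤ J) : R.addIdeal I ≤ R.addIdeal J := by
  intro s hs
  obtain ⟨r, hr, y, hy, rfl⟩ := mem_addIdeal.1 hs
  exact add_mem_addIdeal hr (h hy)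

@[simp]
theorem addIdeal_bot : R.addIdeal ⊥ = R := by
  refine le_antisymm (fun s hs => ?_) le_addIdeal
  obtain ⟨r, hr, y, hy, rfl⟩ := mem_addIdeal.1 hs
  simpa [(Submodule.mem_bot _).1 hy] using hr

section IsLocalRing

variable (R) [IsLocalRing R]

def maximalIdealAdd (J : Ideal S) : Submodule R S :=
  Submodule.map (Algebra.linearMap R S) (maximalIdeal R : Submodule R R) ⊔
    J.restrictScalars R

variable {R}

theorem mem_maximalIdealAdd {x : S} :
    x ∈ R.maximalIdealAdd J ↔ ∃ m ∈ maximalIdeal R, ∃ y ∈ J, x = m + y := by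
  simp only [maximalIdealAdd, Submodule.mem_sup, Submodule.mem_map,
    Submodule.restrictScalars_mem]
  constructor
  · rintro ⟨_, ⟨m, hm, rfl⟩, y, hy, rfl⟩
    exact ⟨m, hm, y, hy, rfl⟩
  · rintro ⟨m, hm, y, hy, rfl⟩
    exact ⟨m, ⟨m, hm, rfl⟩, y, hy, rfl⟩

theorem maximalIdealAdd_subset_addIdeal : (R.maximalIdealAdd J : Set S) ⊆ R.addIdeal J := by
  intro x hx
  obtain ⟨m, -, y, hy, rfl⟩ := mem_maximalIdealAdd.1 hx
  exact add_mem_addIdeal m.2 hy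

theorem mem_maximalIdeal_of_coe_mem (hJ : J ≠ ⊤) {r : R} (hr : (r : S) ∈ J) :
    r ∈ maximalIdeal R :=
  le_maximalIdeal (Ideal.comap_ne_top R.subtype hJ) hr

theorem addIdeal_lt_addIdeal (hIJ : I ≤ J) (hJ : J ≠ ⊤)
    (h : R.maximalIdealAdd I < R.maximalIdealAdd J) : R.addIdeal I < R.addIdeal J := by
  refine (addIdeal_mono hIJ).lt_of_ne fun heq => ?_
  obtain ⟨x, hxJ, hxI⟩ := SetLike.exists_of_lt h
  obtain ⟨m, hm, y, hy, rfl⟩ := mem_maximalIdealAdd.1 hxJ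
  have hx : (m : S) + y ∈ R.addIdeal I := heq ▸ add_mem_addIdeal m.2 hy
  obtain ⟨r, hr, z, hz, hrz⟩ := mem_addIdeal.1 hx
  -- `r - m = y - z` lies in `R ∩ J ⊆ 𝔪`, so `r ∈ 𝔪` and `m + y = r + z ∈ 𝔪 + I`.
  have hrm : ((⟨r, hr⟩ - m : R) : S) ∈ J := by
    have : r - m = y - z := by linear_combination -hrz
    simpa [this] using J.sub_mem hy (hIJ hz)
  have hrM : (⟨r, hr⟩ : R) ∈ maximalIdeal R := by
    simpa using add_mem (mem_maximalIdeal_of_coe_mem hJ hrm) hm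
  exact hxI (mem_maximalIdealAdd.2 ⟨_, hrM, z, hz, hrz⟩)

theorem eq_or_eq_of_addIdeal_le_of_le_addIdeal
    (h : R.maximalIdealAdd I ⋖ R.maximalIdealAdd J) {T : Subring S}
    (hIT : R.addIdeal I ≤ T) (hTJ : T ≤ R.addIdeal J) :
    T = R.addIdeal I ∨ T = R.addIdeal J := by
  have hRT : R ≤ T := le_addIdeal.trans hIT
  let A : Subalgebra R S := { T with algebraMap_mem' := fun r => hRT r.2 }
  set N := R.maximalIdealAdd J ⊓ Subalgebra.toSubmodule A
  have hIN : R.maximalIdealAdd I ≤ N :=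
    le_inf h.le fun x hx => hIT (maximalIdealAdd_subset_addIdeal hx)
  have hJ_sub_MJ : ∀ y ∈ J, y ∈ R.maximalIdealAdd J := fun y hy =>
    mem_maximalIdealAdd.2 ⟨0, zero_mem _, y, hy, by simp⟩
  rcases h.eq_or_eq hIN inf_le_left with hN | hN
  · refine .inl (le_antisymm (fun t ht => ?_) hIT)
    obtain ⟨r, hr, y, hy, rfl⟩ := mem_addIdeal.1 (hTJ ht)
    have hyN : y ∈ N := ⟨hJ_sub_MJ y hy, show y ∈ T by simpa using sub_mem ht (hRT hr)⟩
    obtain ⟨m, -, z, hz, rfl⟩ := mem_maximalIdealAdd.1 (hN ▸ hyN)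
    simpa [add_assoc] using add_mem_addIdeal (add_mem hr m.2) hz
  · refine .inr (le_antisymm hTJ fun t ht => ?_)
    obtain ⟨r, hr, y, hy, rfl⟩ := mem_addIdeal.1 ht
    have hyN : y ∈ N := hN ▸ hJ_sub_MJ y hy
    exact add_mem (hRT hr) hyN.2

theorem maximalIdealAdd_subset_conductor (hIJ : I ≤ J)
    (hMJ : ∀ m ∈ maximalIdeal R, ∀ y ∈ J, (m : S) * y ∈ I) :
    (R.maximalIdealAdd I : Set S) ⊆ conductor (R.addIdeal I) (R.addIdeal J) := by
  intro x hx
  obtain ⟨m, hm, y, hy, rfl⟩ := mem_maximalIdealAdd.1 hx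
  refine ⟨add_mem_addIdeal m.2 (hIJ hy), fun u hu => ?_⟩
  obtain ⟨r, hr, z, hz, rfl⟩ := mem_addIdeal.1 hu
  have : ((m : S) + y) * (r + z) = m * r + (m * z + y * r + y * z) := by ring
  rw [this]
  exact add_mem_addIdeal (mul_mem m.2 hr) <|
    add_mem (add_mem (hMJ m hm z hz) (I.mul_mem_right _ hy)) (I.mul_mem_right _ hy)

theorem conductor_subset_maximalIdealAdd (h : ¬R.addIdeal J ≤ R.addIdeal I) :
    conductor (R.addIdeal I) (R.addIdeal J) ⊆ R.maximalIdealAdd I := by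
  rintro x ⟨-, hx⟩
  obtain ⟨r, hr, z, hz, hxrz⟩ := mem_addIdeal.1 (by simpa using hx 1 (one_mem _))
  by_cases hrM : (⟨r, hr⟩ : R) ∈ maximalIdeal R
  · exact mem_maximalIdealAdd.2 ⟨_, hrM, z, hz, hxrz⟩
  -- If `r` is a unit, then `v = r⁻¹ (x v - z v) ∈ R + I` for every `v ∈ J`, i.e. `R + J ⊆ R + I`.
  refine absurd (fun t ht => ?_) h
  obtain ⟨s, hs, v, hv, rfl⟩ := mem_addIdeal.1 ht
  have hu := notMem_maximalIdeal.1 hrM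
  have hrv : r * v ∈ R.addIdeal I := by
    have : r * v = x * v - z * v := by rw [hxrz]; ring
    rw [this]
    refine sub_mem (hx v (by simpa using add_mem_addIdeal (zero_mem R) hv)) ?_
    simpa using add_mem_addIdeal (zero_mem R) (I.mul_mem_right v hz)
  have hv' : v = (hu.unit⁻¹ : Rˣ) * (r * v) := by
    have hinv := congrArg ((↑) : R → S) hu.val_inv_mul
    push_cast at hinv
    rw [← mul_assoc, hinv, one_mul]
  exact add_mem (le_addIdeal hs) (hv' ▸ mul_mem (le_addIdeal (Subtype.prop _)) hrv)

theorem mul_mem_maximalIdealAdd (hMJ : ∀ m ∈ maximalIdeal R, ∀ y ∈ J, (m : S) * y ∈ I)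
    (hJJ : ∀ a ∈ J, ∀ b ∈ J, a * b ∈ I) {a b : S} (ha : a ∈ R.maximalIdealAdd J)
    (hb : b ∈ R.maximalIdealAdd J) : a * b ∈ R.maximalIdealAdd I := by
  obtain ⟨m, hm, y, hy, rfl⟩ := mem_maximalIdealAdd.1 ha
  obtain ⟨m', hm', y', hy', rfl⟩ := mem_maximalIdealAdd.1 hb
  refine mem_maximalIdealAdd.2 ⟨m * m', Ideal.mul_mem_right _ _ hm, m * y' + m' * y + y * y',
    add_mem (add_mem (hMJ m hm y' hy') (hMJ m' hm' y hy)) (hJJ y hy y' hy'), ?_⟩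
  push_cast
  ring

end IsLocalRing

end Subring

open Subring

theorem stmt15_general (S : Type*) [CommRing S] (R : Subring S)
    [IsLocalRing ↥R]
    (n : ℕ)
    (hn0 : (IsLocalRing.maximalIdeal ↥R) ^ n = ⊥)
    (Mi : ℕ → Submodule ↥R S)
    (hMi : ∀ i, Mi i =
      Submodule.map (Algebra.linearMap ↥R S)
          (IsLocalRing.maximalIdeal ↥R : Submodule ↥R ↥R) ⊔
        Submodule.restrictScalars ↥R
          (Ideal.map (algebraMap ↥R S) ((IsLocalRing.maximalIdeal ↥R) ^ i)))
    (Ri : ℕ → Subring S)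
    (hRi : ∀ i, (Ri i : Set S) =
      {s : S | ∃ r ∈ R, ∃ m ∈ (Ideal.map (algebraMap ↥R S)
        ((IsLocalRing.maximalIdeal ↥R) ^ i) : Set S), s = r + m})
    (hlen : ∀ i, 1 ≤ i → i ≤ n - 1 → Mi (i + 1) ⋖ Mi i) :
    Ri n = R ∧
      ∀ i, 1 ≤ i → i ≤ n - 1 →
        Ri (i + 1) < Ri i ∧
          (∀ T : Subring S, Ri (i + 1) ≤ T → T ≤ Ri i → T = Ri (i + 1) ∨ T = Ri i) ∧
          {t : S | t ∈ Ri i ∧ ∀ u ∈ Ri i, t * u ∈ Ri (i + 1)} = (Mi (i + 1) : Set S) ∧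
          ∀ a ∈ Mi i, ∀ b ∈ Mi i, a * b ∈ Mi (i + 1) := by
  set J : ℕ → Ideal S := fun i => (maximalIdeal R ^ i).map (algebraMap R S)
  obtain rfl : Mi = fun i => R.maximalIdealAdd (J i) := funext hMi
  obtain rfl : Ri = fun i => R.addIdeal (J i) := funext fun i =>
    SetLike.coe_injective ((hRi i).trans (Set.ext fun _ => mem_addIdeal.symm))
  have : Nontrivial S := R.subtype_injective.nontrivial
  have hMJ (i : ℕ) : ∀ m ∈ maximalIdeal R, ∀ y ∈ J i, (m : S) * y ∈ J (i + 1) :=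
    fun m hm y hy => by
      have hm1 : (m : S) ∈ J 1 := Ideal.mem_map_of_mem _ (by rwa [pow_one])
      have := Ideal.mul_mem_map_pow_add _ hm1 hy
      rwa [add_comm 1 i] at this
  refine ⟨by simp [J, hn0], fun i hi hin => ?_⟩
  have hIJ : J (i + 1) ≤ J i := Ideal.map_mono (Ideal.pow_le_pow_right i.le_succ)
  have hJJ : ∀ a ∈ J i, ∀ b ∈ J i, a * b ∈ J (i + 1) := fun a ha b hb =>
    Ideal.map_mono (Ideal.pow_le_pow_right (by omega)) (Ideal.mul_mem_map_pow_add _ ha hb)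
  have hlt := addIdeal_lt_addIdeal hIJ
    (Ideal.map_pow_ne_top_of_pow_eq_bot _ hn0 (by omega)) (hlen i hi hin).lt
  exact ⟨hlt, fun T => eq_or_eq_of_addIdeal_le_of_le_addIdeal (hlen i hi hin),
    (conductor_subset_maximalIdealAdd hlt.not_ge).antisymm
      (maximalIdealAdd_subset_conductor hIJ (hMJ i)),
    fun a ha b hb => mul_mem_maximalIdealAdd (hMJ i) hJJ ha hb⟩

/-- With `(R, M)` local Artinian not a field, `R ⊂ S` finite subintegral with zero
conductor, `n` the nilpotency index of `M`, `M_i := M + SMⁱ` and `R_i := R + SMⁱ`: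
if `L_R(M_i/M_{i+1}) = 1` (i.e. `M_{i+1} ⋖ M_i`) for all `i = 1, …, n-1`, then each
`R_{i+1} ⊂ R_i` is a ramified minimal extension (strict, with no strictly
intermediate ring, with conductor `M_{i+1}` and `M_i² ⊆ M_{i+1}`), so
`R = R_n ⊂ R_{n-1} ⊂ ⋯ ⊂ R_1` is a maximal chain of rings. -/
theorem stmt15 (S : Type*) [CommRing S] (R : Subring S)
    [IsLocalRing ↥R] [IsArtinianRing ↥R] (hnf : ¬ IsField ↥R)
    [Module.Finite ↥R S]
    (hspec : Function.Bijective (fun Q : PrimeSpectrum S => (PrimeSpectrum.comap R.subtype) Q))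
    (hres : ∀ (Q : Ideal S) [Q.IsPrime],
      Function.Bijective
        (IsLocalRing.ResidueField.map
          (Localization.localRingHom (Q.comap R.subtype) Q R.subtype rfl)))
    (hcond : ∀ t : S, (∀ u : S, t * u ∈ R) → t = 0)
    (n : ℕ) (hn : 1 ≤ n)
    (hn0 : (IsLocalRing.maximalIdeal ↥R) ^ n = ⊥)
    (hn1 : (IsLocalRing.maximalIdeal ↥R) ^ (n - 1) ≠ ⊥)
    (Mi : ℕ → Submodule ↥R S)
    (hMi : ∀ i, Mi i =
      Submodule.map (Algebra.linearMap ↥R S)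
          (IsLocalRing.maximalIdeal ↥R : Submodule ↥R ↥R) ⊔
        Submodule.restrictScalars ↥R
          (Ideal.map (algebraMap ↥R S) ((IsLocalRing.maximalIdeal ↥R) ^ i)))
    (Ri : ℕ → Subring S)
    (hRi : ∀ i, (Ri i : Set S) =
      {s : S | ∃ r ∈ R, ∃ m ∈ (Ideal.map (algebraMap ↥R S)
        ((IsLocalRing.maximalIdeal ↥R) ^ i) : Set S), s = r + m})
    (hlen : ∀ i, 1 ≤ i → i ≤ n - 1 → Mi (i + 1) ⋖ Mi i) :
    Ri n = R ∧
      ∀ i, 1 ≤ i → i ≤ n - 1 →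
        Ri (i + 1) < Ri i ∧
          (∀ T : Subring S, Ri (i + 1) ≤ T → T ≤ Ri i → T = Ri (i + 1) ∨ T = Ri i) ∧
          {t : S | t ∈ Ri i ∧ ∀ u ∈ Ri i, t * u ∈ Ri (i + 1)} = (Mi (i + 1) : Set S) ∧
          ∀ a ∈ Mi i, ∀ b ∈ Mi i, a * b ∈ Mi (i + 1) :=
  stmt15_general S R n hn0 Mi hMi Ri hRi hlen
end

section
/- Let R ⊆ S be a ring extension that is a chain (the set of intermediate rings is totally ordered) and let N be a maximal ideal of S. Then R/(N ∩ R) is a valuation domain with quotient field S/N, provided R/(N∩R) ⊆ S/N is integrally closed; in general, the integral closure of R/(N∩R) in S/N is a valuation ring of the field S/N. -/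
/-!
For `x` in the field `K = S/N`, pick lifts `s` of `x` and `t` of `x⁻¹`. The intermediate rings
`R[s]` and `R[t]` are comparable, so after reduction modulo `N` either `x⁻¹ ∈ R'[x]` or
`x ∈ R'[x⁻¹]`, where `R'` is the image of `R`. Since `y⁻¹ ∈ R'[y]` forces `y⁻¹` to be integral
over `R'`, either `x` or `x⁻¹` is integral over `R'`: the integral closure of `R'` in `K` is a valuation
ring of `K`, and equals `R'` when `R'` is integrally closed in `K`.
-/

theorem isIntegral_inv_of_inv_mem_adjoin {A K : Type*} [CommRing A] [Field K] [Algebra A K]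
    {x : K} (hx : x⁻¹ ∈ Algebra.adjoin A {x}) : IsIntegral A x⁻¹ := by
  obtain rfl | hx0 := eq_or_ne x 0
  · simpa using isIntegral_zero
  exact isIntegral_of_isIntegral_adjoin_of_mul_eq_one _ x (mul_inv_cancel₀ hx0)
    (isIntegral_algebraMap (x := (⟨x⁻¹, hx⟩ : Algebra.adjoin A {x})))

theorem Subring.adjoin_singleton_toSubring {S : Type*} [CommRing S] (R : Subring S) (s : S) :
    (Algebra.adjoin R {s}).toSubring = Subring.closure (insert s R) := by
  rw [Algebra.adjoin_eq_ring_closure, Set.union_singleton]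
  congr
  exact Subtype.range_coe

theorem Subring.map_mem_adjoin_singleton {S K : Type*} [CommRing S] [CommRing K]
    {R : Subring S} (f : S →+* K) {s t : S} (h : s ∈ Algebra.adjoin R {t}) :
    f s ∈ Algebra.adjoin (R.map f) {f t} := by
  rw [← Subalgebra.mem_toSubring, Subring.adjoin_singleton_toSubring] at h ⊢
  rw [Subring.coe_map, ← Set.image_insert_eq, ← RingHom.map_closure]
  exact Subring.mem_map.2 ⟨s, h, rfl⟩

theorem Subring.valuationRing_of_forall_mem_or_inv_mem {K : Type*} [Field K] (A : Subring K)
    (h : ∀ x : K, x ∈ A ∨ x⁻¹ ∈ A) : ValuationRing A :=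
  inferInstanceAs (ValuationRing (⟨A, h⟩ : ValuationSubring K))

theorem Subring.isFractionRing_of_forall_mem_or_inv_mem {K : Type*} [Field K] (A : Subring K)
    (h : ∀ x : K, x ∈ A ∨ x⁻¹ ∈ A) : IsFractionRing A K :=
  inferInstanceAs (IsFractionRing (⟨A, h⟩ : ValuationSubring K) K)

theorem isIntegral_or_isIntegral_inv_map_of_chain {S K : Type*} [CommRing S] [Field K]
    {R : Subring S} (hchain : ∀ T₁ T₂ : Subring S, R ≤ T₁ → R ≤ T₂ → T₁ ≤ T₂ ∨ T₂ ≤ T₁)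
    {f : S →+* K} (hf : Function.Surjective f) (x : K) :
    IsIntegral (R.map f) x ∨ IsIntegral (R.map f) x⁻¹ := by
  have le_adjoin (s : S) : R ≤ (Algebra.adjoin R {s}).toSubring := fun r hr ↦
    Subalgebra.algebraMap_mem _ (⟨r, hr⟩ : R)
  obtain ⟨s, rfl⟩ := hf x
  obtain ⟨t, ht⟩ := hf (f s)⁻¹
  rcases hchain _ _ (le_adjoin s) (le_adjoin t) with hst | hts
  · have hs : s ∈ Algebra.adjoin R {t} := hst (Algebra.self_mem_adjoin_singleton R s)
    left
    simpa using isIntegral_inv_of_inv_mem_adjoin (x := (f s)⁻¹)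
      (by simpa [ht] using Subring.map_mem_adjoin_singleton f hs)
  · have ht' : t ∈ Algebra.adjoin R {s} := hts (Algebra.self_mem_adjoin_singleton R t)
    right
    refine isIntegral_inv_of_inv_mem_adjoin ?_
    simpa [ht] using Subring.map_mem_adjoin_singleton f ht'

/-- Let `R ⊆ S` be a chained ring extension and `N` a maximal ideal of `S`. If the
image `R'` of `R` in the field `S/N` is integrally closed there, then `R'` is a
valuation domain with quotient field `S/N`; in general, the integral closure of `R'`
in `S/N` is a valuation ring of the field `S/N`. -/
theorem stmt16 (S : Type*) [CommRing S] (R : Subring S)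
    (hchain : ∀ T₁ T₂ : Subring S, R ≤ T₁ → R ≤ T₂ → T₁ ≤ T₂ ∨ T₂ ≤ T₁)
    (N : Ideal S) (hN : N.IsMaximal) :
    letI : Field (S ⧸ N) := @Ideal.Quotient.field S _ N hN
    ((∀ y : S ⧸ N,
        IsIntegral (R.map (Ideal.Quotient.mk N)) y → y ∈ R.map (Ideal.Quotient.mk N)) →
      ValuationRing (R.map (Ideal.Quotient.mk N)) ∧
        IsFractionRing (R.map (Ideal.Quotient.mk N)) (S ⧸ N)) ∧
      ValuationRing (integralClosure (R.map (Ideal.Quotient.mk N)) (S ⧸ N)) := by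
  let : Field (S ⧸ N) := Ideal.Quotient.field N
  have hint := isIntegral_or_isIntegral_inv_map_of_chain hchain
    (Ideal.Quotient.mk_surjective (I := N))
  refine ⟨fun hclosed ↦ ?_,
    (integralClosure _ _).toSubring.valuationRing_of_forall_mem_or_inv_mem hint⟩
  have hmem (y : S ⧸ N) := (hint y).imp (hclosed y) (hclosed y⁻¹)
  exact ⟨Subring.valuationRing_of_forall_mem_or_inv_mem _ hmem,
    Subring.isFractionRing_of_forall_mem_or_inv_mem _ hmem⟩
end

section
/- Let K be a finite field and T := K[Y]/(Y⁴). Let y denote the image of Y in T, S₁ := K[y²] and S₂ := K[y³]. Then S₁ and S₂ are incomparable intermediate rings of K ⊆ T (neither contains the other); in particular the lattice [K,T] is not a chain. -/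
open Polynomial

/-- Membership says `X ^ n ∣ X ^ a - p(X ^ b)` for some `p`; as `a < n`, the coefficient of `X ^ a`
on the right must vanish, which is impossible unless `b ∣ a`. -/
theorem dvd_of_mk_X_pow_mem_adjoin_mk_X_pow {R : Type*} [CommRing R] [Nontrivial R]
    {n a b : ℕ} (ha : a < n)
    (h : (Ideal.Quotient.mk (Ideal.span {(X : R[X]) ^ n}) X) ^ a ∈
      Algebra.adjoin R {(Ideal.Quotient.mk (Ideal.span {(X : R[X]) ^ n}) X) ^ b}) :
    b ∣ a := by
  rw [Algebra.adjoin_singleton_eq_range_aeval] at h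
  obtain ⟨p, hp⟩ := h
  have hmk : Ideal.Quotient.mk (Ideal.span {(X : R[X]) ^ n}) (expand R b p) =
      Ideal.Quotient.mk _ (X ^ a) := by
    rw [← Ideal.Quotient.mkₐ_eq_mk R, ← aeval_X_left_apply (expand R b p), ← aeval_algHom_apply,
      expand_aeval, map_pow]
    exact hp
  have hdvd : X ^ n ∣ X ^ a - expand R b p := by
    rw [← Ideal.mem_span_singleton, ← Ideal.Quotient.eq, hmk]
  have hcoeff := (X_pow_dvd_iff.mp hdvd) a ha
  rw [coeff_sub, coeff_X_pow_self] at hcoeff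
  rcases b.eq_zero_or_pos with rfl | hb
  · rw [expand_zero, coeff_C] at hcoeff
    rw [zero_dvd_iff]
    by_contra ha0
    simp [ha0] at hcoeff
  · rw [coeff_expand hb] at hcoeff
    by_contra hba
    simp [hba] at hcoeff

theorem stmt18_general (K : Type*) [Field K] :
    let T := Polynomial K ⧸ Ideal.span {(Polynomial.X : Polynomial K) ^ 4}
    let y : T := Ideal.Quotient.mk _ Polynomial.X
    ¬ (Algebra.adjoin K {y ^ 2} ≤ Algebra.adjoin K {y ^ 3}) ∧
      ¬ (Algebra.adjoin K {y ^ 3} ≤ Algebra.adjoin K {y ^ 2}) := by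
  intro T y
  refine ⟨fun h => ?_, fun h => ?_⟩
  · have : 3 ∣ 2 := dvd_of_mk_X_pow_mem_adjoin_mk_X_pow (by norm_num)
      (h (Algebra.self_mem_adjoin_singleton K (y ^ 2)))
    omega
  · have : 2 ∣ 3 := dvd_of_mk_X_pow_mem_adjoin_mk_X_pow (by norm_num)
      (h (Algebra.self_mem_adjoin_singleton K (y ^ 3)))
    omega

/-- Let `K` be a finite field, `T := K[Y]/(Y⁴)` and `y` the image of `Y` in `T`.
Then the subalgebras `S₁ := K[y²]` and `S₂ := K[y³]` are incomparable; in particular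
`[K, T]` is not a chain. -/
theorem stmt18 (K : Type*) [Field K] [Finite K] :
    let T := Polynomial K ⧸ Ideal.span {(Polynomial.X : Polynomial K) ^ 4}
    let y : T := Ideal.Quotient.mk _ Polynomial.X
    ¬ (Algebra.adjoin K {y ^ 2} ≤ Algebra.adjoin K {y ^ 3}) ∧
      ¬ (Algebra.adjoin K {y ^ 3} ≤ Algebra.adjoin K {y ^ 2}) :=
  stmt18_general K
end
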